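/- Let I be a linearly ordered type and C a commutative ring containing ℚ. Let V1, V2, V3 be nonempty words over I with V1 <dlex V3, and consider the polynomial r(V1,V2,V3) ∈ MvPolynomial C P. Let pmax be the ≼-maximum of the multiset (sh(V1,V2)).map(U ↦ χ(U,V3)). Then there exist a positive natural number k and a polynomial q ∈ MvPolynomial C P such that r(V1,V2,V3) = (k : C) • X(pmax) + q and every variable occurring in q (every element of q.vars) is strictly smaller than pmax with respect to ≼. In particular, pmax is the ≼-greatest variable appearing in r(V1,V2,V3); it occurs only linearly, with a nonzero integer coefficient, and is not multiplied by any other variable. -/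

import Mathlib

open scoped Classical

/-- Degree-lexicographic strict order on words over a linearly ordered alphabet:
first compare lengths, then compare lexicographically. -/
def DlexLt {I : Type*} [LinearOrder I] (V W : List I) : Prop :=
  V.length < W.length ∨ (V.length = W.length ∧ V < W)

/-- Degree-lexicographic (non-strict) order on words. -/
def DlexLe {I : Type*} [LinearOrder I] (V W : List I) : Prop :=
  DlexLt V W ∨ V = W

theorem dlexLe_total {I : Type*} [LinearOrder I] (V W : List I) :
    DlexLe V W ∨ DlexLe W V := by
  rcases lt_trichotomy V.length W.length with h | h | h
  · exact Or.inl (Or.inl (Or.inl h))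
  · rcases lt_trichotomy V W with h' | h' | h'
    · exact Or.inl (Or.inl (Or.inr ⟨h, h'⟩))
    · exact Or.inl (Or.inr h')
    · exact Or.inr (Or.inl (Or.inr ⟨h.symm, h'⟩))
  · exact Or.inr (Or.inl (Or.inl h))

/-- The type `P` of pairs `(V, W)` of nonempty words with `V ≤dlex W`. -/
abbrev WordPair (I : Type*) [LinearOrder I] : Type _ :=
  {p : List I × List I // p.1 ≠ [] ∧ p.2 ≠ [] ∧ DlexLe p.1 p.2}

/-- `χ(A, B)`: the pair `(A, B)` normalized so that the first component is
`≤dlex` the second one. -/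
noncomputable def chi {I : Type*} [LinearOrder I] (A B : List I)
    (hA : A ≠ []) (hB : B ≠ []) : WordPair I :=
  if h : DlexLe A B then ⟨(A, B), hA, hB, h⟩
  else ⟨(B, A), hB, hA, (dlexLe_total A B).resolve_left h⟩

/-- The strict order `≺` on `WordPair I`, comparing `(V, W)` by the triple
`(V.length + W.length, V, W)` lexicographically (words compared by `dlex`). -/
def PairLt {I : Type*} [LinearOrder I] (p q : WordPair I) : Prop :=
  p.val.1.length + p.val.2.length < q.val.1.length + q.val.2.length ∨
  (p.val.1.length + p.val.2.length = q.val.1.length + q.val.2.length ∧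
    (DlexLt p.val.1 q.val.1 ∨ (p.val.1 = q.val.1 ∧ DlexLt p.val.2 q.val.2)))

/-- The order `≼` on `WordPair I`. -/
def PairLe {I : Type*} [LinearOrder I] (p q : WordPair I) : Prop :=
  PairLt p q ∨ p = q

/-- The multiset of shuffles of two words. -/
def shuffles {I : Type*} : List I → List I → Multiset (List I)
  | [], w => {w}
  | x :: v, [] => {x :: v}
  | x :: v, y :: w =>
      ((shuffles v (y :: w)).map (x :: ·)) + ((shuffles (x :: v) w).map (y :: ·))
  termination_by v w => v.length + w.length

/-- The variable `X (χ(A, B))` of the polynomial ring `MvPolynomial (WordPair I) C`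
(`0` in the degenerate case of an empty word, which never occurs below). -/
noncomputable def Xchi {I : Type*} [LinearOrder I] (C : Type*) [CommRing C]
    (A B : List I) : MvPolynomial (WordPair I) C :=
  if h : A ≠ [] ∧ B ≠ [] then MvPolynomial.X (chi A B h.1 h.2) else 0

/-- `Σ_{U ∈ sh(A,B)} X(χ(U, W))`, with multiplicity. -/
noncomputable def shSumR {I : Type*} [LinearOrder I] (C : Type*) [CommRing C]
    (A B W : List I) : MvPolynomial (WordPair I) C :=
  ((shuffles A B).map fun U => Xchi C U W).sum

/-- `Σ_{U ∈ sh(A,B)} X(χ(V, U))`, with multiplicity. -/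
noncomputable def shSumL {I : Type*} [LinearOrder I] (C : Type*) [CommRing C]
    (V A B : List I) : MvPolynomial (WordPair I) C :=
  ((shuffles A B).map fun U => Xchi C V U).sum

/-- The defining relation `r(V1, V2, V3)` of the ring of constants `C₂` of the free
integro-differential ring, as a polynomial in `MvPolynomial (WordPair I) C`. -/
noncomputable def rPoly {I : Type*} [LinearOrder I] (C : Type*) [CommRing C]
    (V1 V2 V3 : List I) : MvPolynomial (WordPair I) C :=
  shSumR C V1 V2 V3 - shSumL C V1 V2 V3
  + ∑ j ∈ Finset.range V2.length,
      ((∑ i ∈ Finset.Ico (1 - j) V1.length,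
          Xchi C (V1.drop i) (V2.drop j) * shSumR C (V1.take i) (V2.take j) V3)
        - ∑ k ∈ Finset.Ico (1 - j) V3.length,
          shSumL C V1 (V2.take j) (V3.take k) * Xchi C (V2.drop j) (V3.drop k))

/-- A word is a Lyndon word iff it is nonempty and lexicographically smaller than each of
its proper nonempty suffixes. -/
def IsLyndonWord {I : Type*} [LinearOrder I] (V : List I) : Prop :=
  V ≠ [] ∧ ∀ A U : List I, A ≠ [] → U ≠ [] → V = A ++ U → V < U

/-!
All variables of `r(V1,V2,V3)` have total length `|V1| + |V2| + |V3|` or less. The quadratic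
terms are products of two variables of strictly smaller total length, hence `≺ pmax`. Every
variable `χ(V1, U)`, `U ∈ sh(V2,V3)`, of the second linear sum equals `(V1, U)` and has first
component `V1 <dlex` the first component of `pmax` (a shuffle of `V1` with the nonempty `V2`, or
`V3`). So the only contribution to `pmax` comes from the first linear sum, where it occurs as
often as it is hit by the shuffles of `V1` and `V2`.
-/

open MvPolynomial

section Words

variable {I : Type*}

theorem length_eq_of_mem_shuffles {A B U : List I} (hU : U ∈ shuffles A B) :
    U.length = A.length + B.length := by
  induction A, B using shuffles.induct generalizing U with
  | case1 w => simp_all [shuffles]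
  | case2 x v => simp_all [shuffles]
  | case3 x v y w ih1 ih2 =>
    simp only [shuffles, Multiset.mem_add, Multiset.mem_map] at hU
    rcases hU with ⟨U', hU', rfl⟩ | ⟨U', hU', rfl⟩
    · simp only [List.length_cons, ih1 hU']; omega
    · simp only [List.length_cons, ih2 hU']; omega

theorem ne_nil_of_mem_shuffles {A B U : List I} (hA : A ≠ []) (hU : U ∈ shuffles A B) :
    U ≠ [] := by
  rw [← List.length_pos_iff, length_eq_of_mem_shuffles hU]
  exact Nat.add_pos_left (List.length_pos_iff.mpr hA) _

variable [LinearOrder I]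

theorem chi_length_add (A B : List I) (hA : A ≠ []) (hB : B ≠ []) :
    (chi A B hA hB).val.1.length + (chi A B hA hB).val.2.length = A.length + B.length := by
  unfold chi; split <;> simp [Nat.add_comm]

theorem chi_fst_eq_or (A B : List I) (hA : A ≠ []) (hB : B ≠ []) :
    (chi A B hA hB).val.1 = A ∨ (chi A B hA hB).val.1 = B := by
  unfold chi; split
  · exact Or.inl rfl
  · exact Or.inr rfl

theorem chi_of_dlexLe {A B : List I} (hA : A ≠ []) (hB : B ≠ []) (h : DlexLe A B) :
    chi A B hA hB = ⟨(A, B), hA, hB, h⟩ :=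
  dif_pos h

theorem Xchi_of_ne_nil (C : Type*) [CommRing C] {A B : List I} (hA : A ≠ []) (hB : B ≠ []) :
    Xchi C A B = X (chi A B hA hB) :=
  dif_pos ⟨hA, hB⟩

end Words

section Supported

variable {σ R : Type*} [CommRing R] {s : Set σ}

theorem X_mem_supported_of_mem {i : σ} (hi : i ∈ s) : (X i : MvPolynomial σ R) ∈ supported R s :=
  Algebra.subset_adjoin ⟨i, hi, rfl⟩

theorem sum_map_X_sub_count_nsmul_mem_supported [DecidableEq σ] {S : Multiset σ} {a : σ}
    (hS : ∀ b ∈ S, b ≠ a → b ∈ s) :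
    (S.map X).sum - S.count a • (X a : MvPolynomial σ R) ∈ supported R s := by
  have hsplit : (S.map X).sum = S.count a • (X a : MvPolynomial σ R)
      + ((S.filter (· ≠ a)).map X).sum := by
    conv_lhs => rw [← Multiset.filter_add_not (· = a) S]
    rw [Multiset.map_add, Multiset.sum_add, Multiset.filter_eq', Multiset.map_replicate,
      Multiset.sum_replicate]
  rw [hsplit, add_sub_cancel_left]
  refine Subalgebra.multiset_sum_mem _ fun f hf => ?_
  obtain ⟨b, hb, rfl⟩ := Multiset.mem_map.mp hf
  obtain ⟨hbS, hba⟩ := Multiset.mem_filter.mp hb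
  exact X_mem_supported_of_mem (hS b hbS hba)

end Supported

section Relation

variable {I : Type*} [LinearOrder I] (C : Type*) [CommRing C] {p : WordPair I}

noncomputable def rQuadratic (V1 V2 V3 : List I) : MvPolynomial (WordPair I) C :=
  ∑ j ∈ Finset.range V2.length,
      ((∑ i ∈ Finset.Ico (1 - j) V1.length,
          Xchi C (V1.drop i) (V2.drop j) * shSumR C (V1.take i) (V2.take j) V3)
        - ∑ k ∈ Finset.Ico (1 - j) V3.length,
          shSumL C V1 (V2.take j) (V3.take k) * Xchi C (V2.drop j) (V3.drop k))

theorem rPoly_eq (V1 V2 V3 : List I) :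
    rPoly C V1 V2 V3 = shSumR C V1 V2 V3 - shSumL C V1 V2 V3 + rQuadratic C V1 V2 V3 :=
  rfl

theorem Xchi_mem_supported_of_length_lt {A B : List I}
    (h : A.length + B.length < p.val.1.length + p.val.2.length) :
    Xchi C A B ∈ supported C {q | PairLt q p} := by
  unfold Xchi
  split
  · exact X_mem_supported_of_mem (Or.inl (by rwa [chi_length_add]))
  · exact zero_mem _

theorem shSumR_mem_supported_of_length_lt {A B W : List I}
    (h : A.length + B.length + W.length < p.val.1.length + p.val.2.length) :
    shSumR C A B W ∈ supported C {q | PairLt q p} := by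
  refine Subalgebra.multiset_sum_mem _ fun f hf => ?_
  obtain ⟨U, hU, rfl⟩ := Multiset.mem_map.mp hf
  exact Xchi_mem_supported_of_length_lt C (by rwa [length_eq_of_mem_shuffles hU])

theorem shSumL_mem_supported_of_length_lt {V A B : List I}
    (h : V.length + (A.length + B.length) < p.val.1.length + p.val.2.length) :
    shSumL C V A B ∈ supported C {q | PairLt q p} := by
  refine Subalgebra.multiset_sum_mem _ fun f hf => ?_
  obtain ⟨U, hU, rfl⟩ := Multiset.mem_map.mp hf
  exact Xchi_mem_supported_of_length_lt C (by rwa [length_eq_of_mem_shuffles hU])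

theorem rQuadratic_mem_supported {V1 V2 V3 : List I} (h1 : V1 ≠ []) (h3 : V3 ≠ [])
    (hp : p.val.1.length + p.val.2.length = V1.length + V2.length + V3.length) :
    rQuadratic C V1 V2 V3 ∈ supported C {q | PairLt q p} := by
  have hn := List.length_pos_iff.mpr h1
  have hl := List.length_pos_iff.mpr h3
  refine sum_mem fun j hj => ?_
  rw [Finset.mem_range] at hj
  refine sub_mem (sum_mem fun i hi => ?_) (sum_mem fun k hk => ?_)
  · rw [Finset.mem_Ico] at hi
    exact mul_mem (Xchi_mem_supported_of_length_lt C (by simp only [List.length_drop]; omega))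
      (shSumR_mem_supported_of_length_lt C (by simp only [List.length_take]; omega))
  · rw [Finset.mem_Ico] at hk
    exact mul_mem (shSumL_mem_supported_of_length_lt C (by simp only [List.length_take]; omega))
      (Xchi_mem_supported_of_length_lt C (by simp only [List.length_drop]; omega))

theorem shSumL_mem_supported {V1 V2 V3 : List I} (h1 : V1 ≠ [])
    (hlen : V1.length < V2.length + V3.length)
    (hp : p.val.1.length + p.val.2.length = V1.length + V2.length + V3.length)
    (hfst : DlexLt V1 p.val.1) :
    shSumL C V1 V2 V3 ∈ supported C {q | PairLt q p} := by
  refine Subalgebra.multiset_sum_mem _ fun f hf => ?_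
  obtain ⟨U, hU, rfl⟩ := Multiset.mem_map.mp hf
  have hUlen := length_eq_of_mem_shuffles hU
  have hUne : U ≠ [] := List.ne_nil_of_length_pos (by omega)
  have hV1U : DlexLe V1 U := Or.inl (Or.inl (by omega))
  rw [Xchi_of_ne_nil C h1 hUne, chi_of_dlexLe h1 hUne hV1U]
  exact X_mem_supported_of_mem (Or.inr ⟨by simp only; omega, Or.inl hfst⟩)

theorem exists_shSumR_sub_nsmul_X_mem_supported {V1 V2 V3 : List I} (h1 : V1 ≠ [])
    (h3 : V3 ≠ [])
    (hmem : ∃ (U : List I) (hU : U ≠ []), U ∈ shuffles V1 V2 ∧ p = chi U V3 hU h3)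
    (hmax : ∀ U ∈ shuffles V1 V2, ∀ hU : U ≠ [], PairLe (chi U V3 hU h3) p) :
    ∃ k : ℕ, 0 < k ∧ shSumR C V1 V2 V3 - k • X p ∈ supported C {q | PairLt q p} := by
  have hne : ∀ U ∈ shuffles V1 V2, U ≠ [] := fun _ hU => ne_nil_of_mem_shuffles h1 hU
  set S := (shuffles V1 V2).pmap (fun U hU => chi U V3 hU h3) hne
  have hS : shSumR C V1 V2 V3 = (S.map X).sum := by
    rw [Multiset.map_pmap, shSumR, ← Multiset.pmap_eq_map _ _ _ hne]
    congr 1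
    exact Multiset.pmap_congr _ fun U _ hU _ => Xchi_of_ne_nil C hU h3
  refine ⟨S.count p, Multiset.count_pos.mpr ?_, ?_⟩
  · obtain ⟨U, hU, hUmem, rfl⟩ := hmem
    exact Multiset.mem_pmap.mpr ⟨U, hUmem, rfl⟩
  · rw [hS]
    refine sum_map_X_sub_count_nsmul_mem_supported fun b hb hbp => ?_
    obtain ⟨U, hU, rfl⟩ := Multiset.mem_pmap.mp hb
    exact (hmax U hU _).resolve_right hbp

end Relation

theorem stmt_10_general {I : Type*} [LinearOrder I] (C : Type*) [CommRing C]
    (V1 V2 V3 : List I) (h1 : V1 ≠ []) (h2 : V2 ≠ []) (h3 : V3 ≠ [])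
    (h13 : DlexLt V1 V3)
    (pmax : WordPair I)
    (hmem : ∃ (U : List I) (hU : U ≠ []), U ∈ shuffles V1 V2 ∧ pmax = chi U V3 hU h3)
    (hmax : ∀ U ∈ shuffles V1 V2, ∀ hU : U ≠ [], PairLe (chi U V3 hU h3) pmax) :
    ∃ k : ℕ, 0 < k ∧ ∃ q : MvPolynomial (WordPair I) C,
      rPoly C V1 V2 V3 = (k : C) • MvPolynomial.X pmax + q ∧
      ∀ p ∈ q.vars, PairLt p pmax := by
  obtain ⟨k, hk, hR⟩ := exists_shSumR_sub_nsmul_X_mem_supported C h1 h3 hmem hmax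
  obtain ⟨U, hU, hUmem, rfl⟩ := hmem
  have hUlen := length_eq_of_mem_shuffles hUmem
  have hm := List.length_pos_iff.mpr h2
  have hnl : V1.length ≤ V3.length := by rcases h13 with h | ⟨h, _⟩ <;> omega
  have hp : (chi U V3 hU h3).val.1.length + (chi U V3 hU h3).val.2.length
      = V1.length + V2.length + V3.length := by
    rw [chi_length_add, hUlen]
  have hfst : DlexLt V1 (chi U V3 hU h3).val.1 := by
    rcases chi_fst_eq_or U V3 hU h3 with h | h <;> rw [h]
    · exact Or.inl (by omega)
    · exact h13
  refine ⟨k, hk, rPoly C V1 V2 V3 - (k : C) • X _, by abel, fun q hq =>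
    (mem_supported (s := {q | PairLt q _})).mp ?_ hq⟩
  rw [Nat.cast_smul_eq_nsmul, rPoly_eq, add_sub_right_comm, sub_right_comm]
  exact add_mem (sub_mem hR (shSumL_mem_supported C h1 (by omega) hp hfst))
    (rQuadratic_mem_supported C h1 h3 hp)

/-- For nonempty words `V1 <dlex V3` and any `V2`, the `≼`-maximum
`pmax` of the multiset `(sh(V1,V2)).map (U ↦ χ(U,V3))` is the `≼`-greatest variable
appearing in `r(V1,V2,V3)`: it occurs linearly, with a positive integer coefficient,
and is not multiplied by any other variable. -/
theorem stmt_10 {I : Type*} [LinearOrder I] (C : Type*) [CommRing C] [Algebra ℚ C]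
    [Nontrivial C]
    (V1 V2 V3 : List I) (h1 : V1 ≠ []) (h2 : V2 ≠ []) (h3 : V3 ≠ [])
    (h13 : DlexLt V1 V3)
    (pmax : WordPair I)
    (hmem : ∃ (U : List I) (hU : U ≠ []), U ∈ shuffles V1 V2 ∧ pmax = chi U V3 hU h3)
    (hmax : ∀ U ∈ shuffles V1 V2, ∀ hU : U ≠ [], PairLe (chi U V3 hU h3) pmax) :
    ∃ k : ℕ, 0 < k ∧ ∃ q : MvPolynomial (WordPair I) C,
      rPoly C V1 V2 V3 = (k : C) • MvPolynomial.X pmax + q ∧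
      ∀ p ∈ q.vars, PairLt p pmax :=
  stmt_10_general C V1 V2 V3 h1 h2 h3 h13 pmax hmem hmax
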